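/- The infinite alternating group A_∞ is non-uniformly simple: for every constant C there exist nontrivial elements g and h of A_∞ such that λ_h(g) > C. -/

import Mathlib

/-- `g` belongs to `S_∞`: a permutation of `ℕ` with finite support. -/
def FinSupp (g : Equiv.Perm ℕ) : Prop := {x : ℕ | g x ≠ x}.Finite

/-- `g` is an even permutation: a product of an even number of transpositions. -/
def IsEvenPerm (g : Equiv.Perm ℕ) : Prop :=
  ∃ l : List (Equiv.Perm ℕ), (∀ τ ∈ l, τ.IsSwap) ∧ Even l.length ∧ l.prod = g

/-- `g` belongs to the infinite alternating group `A_∞`. -/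
def MemAinf (g : Equiv.Perm ℕ) : Prop := FinSupp g ∧ IsEvenPerm g

/-- `g` and `h` are conjugate in `S_∞` (by a finitely supported permutation). -/
def ConjS (g h : Equiv.Perm ℕ) : Prop := ∃ c, FinSupp c ∧ c * g * c⁻¹ = h

/-- `g` and `h` are conjugate in `A_∞` (by an even finitely supported permutation). -/
def ConjA (g h : Equiv.Perm ℕ) : Prop := ∃ c, MemAinf c ∧ c * g * c⁻¹ = h

/-- the class `[h]`: the union of the `A_∞`-conjugacy classes of `h` and `h⁻¹`. -/
def cls (h : Equiv.Perm ℕ) : Set (Equiv.Perm ℕ) := {x | ConjA h x ∨ ConjA h⁻¹ x}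

/-- `λ_h(g)`: the minimal `n` such that `g` is a product of `n` elements of `[h]`. -/
noncomputable def lam (h g : Equiv.Perm ℕ) : ℕ :=
  sInf {n | ∃ l : List (Equiv.Perm ℕ), l.length = n ∧ (∀ x ∈ l, x ∈ cls h) ∧ l.prod = g}

/-- the word length `λ(g)`: the minimal number of transpositions with product `g`. -/
noncomputable def wl (g : Equiv.Perm ℕ) : ℕ :=
  sInf {n | ∃ l : List (Equiv.Perm ℕ), l.length = n ∧ (∀ τ ∈ l, τ.IsSwap) ∧ l.prod = g}

/-- `ι_k = (1 2)(3 4)⋯(2k−1 2k)`. -/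
def iota (k : ℕ) : Equiv.Perm ℕ :=
  ((List.range k).map (fun i => Equiv.swap (2*i+1) (2*i+2))).prod

/-- the basic block `(4i+1, 4i+2)(4i+3, 4i+4)`. -/
def hseq (i : ℕ) : Equiv.Perm ℕ :=
  Equiv.swap (4*i+1) (4*i+2) * Equiv.swap (4*i+3) (4*i+4)

lemma hseq_apply (i x : ℕ) : hseq i x =
    if x = 4*i+1 then 4*i+2 else if x = 4*i+2 then 4*i+1 else
    if x = 4*i+3 then 4*i+4 else if x = 4*i+4 then 4*i+3 else x := by
  simp only [hseq, Equiv.Perm.mul_apply, Equiv.swap_apply_def]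
  split_ifs <;> omega

def gl (n : ℕ) : List (Equiv.Perm ℕ) := (List.range n).map hseq

lemma gl_prod_apply (n : ℕ) : ∀ x, (gl n).prod x =
    if 1 ≤ x ∧ x ≤ 4*n then (if x % 2 = 1 then x+1 else x-1) else x := by
  induction n with
  | zero =>
    intro x
    simp only [gl, List.range_zero, List.map_nil, List.prod_nil, Equiv.Perm.one_apply]
    split_ifs <;> omega
  | succ n ih =>
    intro x
    rw [gl, List.range_succ, List.map_append, List.prod_append]
    simp only [List.map_cons, List.map_nil, List.prod_cons, List.prod_nil, mul_one,
      Equiv.Perm.mul_apply]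
    rw [show ((List.range n).map hseq) = gl n from rfl, hseq_apply]
    split_ifs with h1 h2 h3 h4 <;> rw [ih] <;> split_ifs <;> omega

lemma finsupp_mul {a b : Equiv.Perm ℕ} (ha : FinSupp a) (hb : FinSupp b) :
    FinSupp (a * b) := by
  refine (ha.union hb).subset ?_
  intro x hx
  by_contra hc
  simp only [Set.mem_union, Set.mem_setOf_eq, not_or, not_not] at hc
  exact hx (by simp [Equiv.Perm.mul_apply, hc.1, hc.2])

lemma finsupp_swap (a b : ℕ) : FinSupp (Equiv.swap a b) := by
  refine (Set.toFinite ({a, b} : Set ℕ)).subset ?_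
  intro x hx
  by_contra hc
  simp only [Set.mem_insert_iff, Set.mem_singleton_iff, not_or] at hc
  exact hx (Equiv.swap_apply_of_ne_of_ne hc.1 hc.2)

lemma even_one : IsEvenPerm 1 := ⟨[], by simp, by simp, by simp⟩

lemma even_mul {a b : Equiv.Perm ℕ} (ha : IsEvenPerm a) (hb : IsEvenPerm b) :
    IsEvenPerm (a * b) := by
  obtain ⟨l1, hs1, he1, hp1⟩ := ha
  obtain ⟨l2, hs2, he2, hp2⟩ := hb
  refine ⟨l1 ++ l2, ?_, ?_, ?_⟩
  · intro τ hτ; rcases List.mem_append.1 hτ with h | h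
    · exact hs1 τ h
    · exact hs2 τ h
  · simpa [List.length_append] using he1.add he2
  · rw [List.prod_append, hp1, hp2]

lemma even_hseq (i : ℕ) : IsEvenPerm (hseq i) := by
  refine ⟨[Equiv.swap (4*i+1) (4*i+2), Equiv.swap (4*i+3) (4*i+4)], ?_, ?_, ?_⟩
  · intro τ hτ
    simp only [List.mem_cons, List.not_mem_nil, or_false] at hτ
    rcases hτ with rfl | rfl
    · exact ⟨_, _, by omega, rfl⟩
    · exact ⟨_, _, by omega, rfl⟩
  · simp
  · simp [hseq]

lemma memAinf_hseq (i : ℕ) : MemAinf (hseq i) :=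
  ⟨finsupp_mul (finsupp_swap _ _) (finsupp_swap _ _), even_hseq i⟩

/-- support of a conjugate is the image of the support -/
lemma supp_conj (c g : Equiv.Perm ℕ) :
    {x | (c * g * c⁻¹) x ≠ x} = c '' {x | g x ≠ x} := by
  ext y
  simp only [Set.mem_setOf_eq, Set.mem_image, Equiv.Perm.mul_apply]
  constructor
  · intro hy
    refine ⟨c⁻¹ y, ?_, by simp⟩
    intro h
    apply hy
    rw [h]; simp
  · rintro ⟨z, hz, rfl⟩
    simp only [Equiv.Perm.inv_def, Equiv.symm_apply_apply]
    exact fun h => hz (c.injective h)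

lemma supp_prod_le (l : List (Equiv.Perm ℕ))
    (h : ∀ x ∈ l, {y | x y ≠ y}.Finite ∧ {y | x y ≠ y}.ncard ≤ 4) :
    {y | l.prod y ≠ y}.Finite ∧ {y | l.prod y ≠ y}.ncard ≤ 4 * l.length := by
  induction l with
  | nil => simp
  | cons a l ih =>
    have ha := h a (List.mem_cons_self)
    have ihl := ih (fun x hx => h x (List.mem_cons_of_mem a hx))
    have hsub : {y | (a :: l).prod y ≠ y} ⊆ {y | a y ≠ y} ∪ {y | l.prod y ≠ y} := by
      intro y hy
      by_contra hc
      simp only [Set.mem_union, Set.mem_setOf_eq, not_or, not_not] at hc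
      exact hy (by simp [List.prod_cons, Equiv.Perm.mul_apply, hc.1, hc.2])
    have hfin : ({y | a y ≠ y} ∪ {y | l.prod y ≠ y}).Finite := ha.1.union ihl.1
    refine ⟨hfin.subset hsub, ?_⟩
    calc {y | (a :: l).prod y ≠ y}.ncard ≤ ({y | a y ≠ y} ∪ {y | l.prod y ≠ y}).ncard :=
          Set.ncard_le_ncard hsub hfin
      _ ≤ {y | a y ≠ y}.ncard + {y | l.prod y ≠ y}.ncard := Set.ncard_union_le _ _
      _ ≤ 4 + 4 * l.length := Nat.add_le_add ha.2 ihl.2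
      _ = 4 * (a :: l).length := by simp [List.length_cons]; ring

lemma supp_hseq (i : ℕ) :
    {y | hseq i y ≠ y} = ↑({4*i+1, 4*i+2, 4*i+3, 4*i+4} : Finset ℕ) := by
  ext y
  simp only [Set.mem_setOf_eq, hseq_apply, Finset.coe_insert, Set.mem_insert_iff,
    Finset.coe_singleton, Set.mem_singleton_iff]
  split_ifs <;> omega

lemma hseq_inv (i : ℕ) : (hseq i)⁻¹ = hseq i := by
  rw [eq_comm, eq_inv_iff_mul_eq_one]
  ext x
  simp only [Equiv.Perm.mul_apply, hseq_apply, Equiv.Perm.one_apply]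
  split_ifs <;> omega

/-- every element of `cls (hseq 0)` has support of size at most 4 -/
lemma cls_supp {x : Equiv.Perm ℕ} (hx : x ∈ cls (hseq 0)) :
    {y | x y ≠ y}.Finite ∧ {y | x y ≠ y}.ncard ≤ 4 := by
  rw [cls, Set.mem_setOf_eq, hseq_inv, or_self] at hx
  obtain ⟨c, _, rfl⟩ := hx
  rw [supp_conj]
  constructor
  · refine Set.Finite.image c ?_
    rw [supp_hseq]; exact Finset.finite_toSet _
  · rw [Set.ncard_image_of_injective _ c.injective, supp_hseq, Set.ncard_coe_finset]
    simp

lemma conj_hseq (i : ℕ) : ConjA (hseq 0) (hseq i) := by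
  rcases Nat.eq_zero_or_pos i with rfl | hi
  · exact ⟨1, ⟨by simp [FinSupp], even_one⟩, by group⟩
  · set c : Equiv.Perm ℕ := Equiv.swap 1 (4*i+1) * Equiv.swap 2 (4*i+2) *
      Equiv.swap 3 (4*i+3) * Equiv.swap 4 (4*i+4) with hc
    have fix : ∀ a b x : ℕ, x ≠ a → x ≠ b → Equiv.swap a b x = x :=
      fun _ _ _ h1 h2 => Equiv.swap_apply_of_ne_of_ne h1 h2
    have e1 : Equiv.swap 1 (4*i+1) (4*0+1) = 4*i+1 := Equiv.swap_apply_left _ _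
    have e2 : Equiv.swap 2 (4*i+2) (4*0+2) = 4*i+2 := Equiv.swap_apply_left _ _
    have e3 : Equiv.swap 3 (4*i+3) (4*0+3) = 4*i+3 := Equiv.swap_apply_left _ _
    have e4 : Equiv.swap 4 (4*i+4) (4*0+4) = 4*i+4 := Equiv.swap_apply_left _ _
    have hc1 : c (4*0+1) = 4*i+1 := by
      rw [hc]
      simp only [Equiv.Perm.mul_apply]
      rw [fix 4 (4*i+4) (4*0+1) (by omega) (by omega),
        fix 3 (4*i+3) (4*0+1) (by omega) (by omega),
        fix 2 (4*i+2) (4*0+1) (by omega) (by omega), e1]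
    have hc2 : c (4*0+2) = 4*i+2 := by
      rw [hc]
      simp only [Equiv.Perm.mul_apply]
      rw [fix 4 (4*i+4) (4*0+2) (by omega) (by omega),
        fix 3 (4*i+3) (4*0+2) (by omega) (by omega), e2,
        fix 1 (4*i+1) (4*i+2) (by omega) (by omega)]
    have hc3 : c (4*0+3) = 4*i+3 := by
      rw [hc]
      simp only [Equiv.Perm.mul_apply]
      rw [fix 4 (4*i+4) (4*0+3) (by omega) (by omega), e3,
        fix 2 (4*i+2) (4*i+3) (by omega) (by omega),
        fix 1 (4*i+1) (4*i+3) (by omega) (by omega)]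
    have hc4 : c (4*0+4) = 4*i+4 := by
      rw [hc]
      simp only [Equiv.Perm.mul_apply]
      rw [e4, fix 3 (4*i+3) (4*i+4) (by omega) (by omega),
        fix 2 (4*i+2) (4*i+4) (by omega) (by omega),
        fix 1 (4*i+1) (4*i+4) (by omega) (by omega)]
    refine ⟨c, ⟨?_, ?_⟩, ?_⟩
    · exact finsupp_mul (finsupp_mul (finsupp_mul (finsupp_swap _ _) (finsupp_swap _ _))
        (finsupp_swap _ _)) (finsupp_swap _ _)
    · refine ⟨[Equiv.swap 1 (4*i+1), Equiv.swap 2 (4*i+2),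
        Equiv.swap 3 (4*i+3), Equiv.swap 4 (4*i+4)], ?_, by simp only [List.length_cons, List.length_nil]; decide, by simp [hc, mul_assoc]⟩
      intro τ hτ
      simp only [List.mem_cons, List.not_mem_nil, or_false] at hτ
      rcases hτ with rfl | rfl | rfl | rfl
      · exact ⟨_, _, by omega, rfl⟩
      · exact ⟨_, _, by omega, rfl⟩
      · exact ⟨_, _, by omega, rfl⟩
      · exact ⟨_, _, by omega, rfl⟩
    · have key : c * hseq 0 * c⁻¹ =
          (c * Equiv.swap (4*0+1) (4*0+2) * c⁻¹) * (c * Equiv.swap (4*0+3) (4*0+4) * c⁻¹) := by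
        rw [hseq]; group
      rw [key, ← Equiv.swap_apply_apply, ← Equiv.swap_apply_apply,
        hc1, hc2, hc3, hc4, hseq]

/-- `A_∞` is non-uniformly simple: for every constant `C` there are
nontrivial `g, h ∈ A_∞` with `λ_h(g) > C`. -/
theorem stmt6 (C : ℕ) :
    ∃ g h : Equiv.Perm ℕ, MemAinf g ∧ MemAinf h ∧ g ≠ 1 ∧ h ≠ 1 ∧ C < lam h g := by
  set g := (gl (C+1)).prod with hg
  refine ⟨g, hseq 0, ⟨?_, ?_⟩, memAinf_hseq 0, ?_, ?_, ?_⟩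
  · refine (Finset.finite_toSet (Finset.Icc 1 (4*(C+1)))).subset ?_
    intro x hx
    rw [Set.mem_setOf_eq, hg, gl_prod_apply] at hx
    simp only [Finset.coe_Icc, Set.mem_Icc]
    by_contra hc
    rw [if_neg (by omega)] at hx
    exact hx rfl
  · rw [hg, gl]
    induction (List.range (C+1)) with
    | nil => simpa using even_one
    | cons a l ih =>
      simp only [List.map_cons, List.prod_cons]
      exact even_mul (even_hseq a) ih
  · intro hE
    have h1 : g 1 = (1 : Equiv.Perm ℕ) 1 := by rw [hE]
    simp only [Equiv.Perm.one_apply] at h1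
    rw [hg, gl_prod_apply, if_pos (by omega)] at h1
    norm_num at h1
  · intro hE
    have h1 : hseq 0 1 = (1 : Equiv.Perm ℕ) 1 := by rw [hE]
    simp only [Equiv.Perm.one_apply] at h1
    rw [hseq_apply] at h1
    norm_num at h1
  · rw [lam]
    have hne : {m | ∃ l : List (Equiv.Perm ℕ), l.length = m ∧
        (∀ x ∈ l, x ∈ cls (hseq 0)) ∧ l.prod = g}.Nonempty := by
      refine ⟨C+1, gl (C+1), by simp [gl], ?_, rfl⟩
      intro x hx
      rw [gl] at hx
      obtain ⟨i, _, rfl⟩ := List.mem_map.1 hx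
      exact Or.inl (conj_hseq i)
    obtain ⟨l, hlen, hmem, hprod⟩ := Nat.sInf_mem hne
    have hcount := supp_prod_le l (fun x hx => cls_supp (hmem x hx))
    rw [hprod] at hcount
    have hsupp : ↑(Finset.Icc 1 (4*(C+1))) ⊆ {y | g y ≠ y} := by
      intro y hy
      simp only [Finset.coe_Icc, Set.mem_Icc] at hy
      rw [Set.mem_setOf_eq, hg, gl_prod_apply, if_pos hy]
      split_ifs <;> omega
    have h1 : 4 * (C+1) ≤ {y | g y ≠ y}.ncard := by
      have := Set.ncard_le_ncard hsupp hcount.1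
      rwa [Set.ncard_coe_finset, Nat.card_Icc, Nat.add_sub_cancel] at this
    have h2 : 4 * (C+1) ≤ 4 * l.length := le_trans h1 hcount.2
    have h3 : C + 1 ≤ l.length := Nat.le_of_mul_le_mul_left h2 (by norm_num)
    rw [hlen] at h3
    exact h3
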